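/- arXiv:2603.06356 — 3 statements merged into one kernel-verified Lean document; each statement's English description precedes it below -/
import Mathlib

section
/- Let N, N_l be finite nonempty index sets, c : N → ℝ³ and c' : N_l → ℝ³ sphere centers with radii r : N → ℝ≥0 and r' : N_l → ℝ≥0, and let O ⊆ ℝ³ be a nonempty set of obstacle points. Suppose for every j ∈ N there exists k ∈ N_l with ‖c j − c' k‖ − r' k + r j ≤ R. If the leader's body clearance d_l := inf over (k, o) ∈ N_l × O of (‖c' k − o‖ − r' k) satisfies d_l ≥ R, then ‖c j − o‖ − r j ≥ 0 for every j ∈ N and every o ∈ O. -/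
theorem leader_to_formation_safety_transfer
    {N Nl : Type*} [Fintype N] [Fintype Nl] [Nonempty N] [Nonempty Nl]
    (c : N → EuclideanSpace ℝ (Fin 3)) (c' : Nl → EuclideanSpace ℝ (Fin 3))
    (r : N → ℝ) (r' : Nl → ℝ) (hr : ∀ j, 0 ≤ r j) (hr' : ∀ k, 0 ≤ r' k)
    (O : Set (EuclideanSpace ℝ (Fin 3))) (hO : O.Nonempty)
    (R : ℝ)
    (hform : ∀ j : N, ∃ k : Nl, ‖c j - c' k‖ - r' k + r j ≤ R)
    (dl : ℝ)
    (hdl : IsGLB {x : ℝ | ∃ k : Nl, ∃ o ∈ O, x = ‖c' k - o‖ - r' k} dl)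
    (hclear : R ≤ dl) :
    ∀ j : N, ∀ o ∈ O, 0 ≤ ‖c j - o‖ - r j := by
  intro j o ho
  obtain ⟨k, hk⟩ := hform j
  have hmem : ‖c' k - o‖ - r' k ∈ {x : ℝ | ∃ k : Nl, ∃ o ∈ O, x = ‖c' k - o‖ - r' k} :=
    ⟨k, o, ho, rfl⟩
  have hlb : dl ≤ ‖c' k - o‖ - r' k := hdl.1 hmem
  have htri : ‖c' k - o‖ ≤ ‖c' k - c j‖ + ‖c j - o‖ := norm_sub_le_norm_sub_add_norm_sub _ _ _
  have hsymm : ‖c' k - c j‖ = ‖c j - c' k‖ := norm_sub_rev _ _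
  linarith
end

section
/- Let h : [0,∞) → ℝ be twice continuously differentiable, α₁, α₂ > 0, and define b(t) = ḣ(t) + α₁ h(t). Suppose ḃ(t) ≥ −α₂ b(t) for all t ≥ 0, h(0) ≥ 0, and b(0) ≥ 0. Then h(t) ≥ 0 for all t ≥ 0. -/
/-!
If `f' ≥ -α f` on `[0, ∞)` then `t ↦ exp (α t) f t` is nondecreasing there, so `f 0 ≥ 0`
propagates forward. Applied to `b` this gives `b ≥ 0`, i.e. `h' ≥ -α₁ h`, and applied once more,
to `h`, it gives `h ≥ 0`.
-/

open Real Set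

theorem monotoneOn_exp_mul_of_deriv_ge_neg_mul {f : ℝ → ℝ} {α : ℝ} (hf : Differentiable ℝ f)
    (hd : ∀ t, 0 ≤ t → -α * f t ≤ deriv f t) :
    MonotoneOn (fun t => exp (α * t) * f t) (Ici 0) := by
  have hderiv : ∀ t, HasDerivAt (fun t => exp (α * t) * f t)
      (exp (α * t) * (deriv f t + α * f t)) t := by
    intro t
    have hexp : HasDerivAt (fun t => exp (α * t)) (exp (α * t) * α) t := by
      simpa using ((hasDerivAt_id t).const_mul α).exp
    exact (hexp.fun_mul (hf t).hasDerivAt).congr_deriv (by ring)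
  refine monotoneOn_of_deriv_nonneg (convex_Ici 0)
    (fun t _ => (hderiv t).continuousAt.continuousWithinAt)
    (fun t _ => (hderiv t).differentiableAt.differentiableWithinAt) fun t ht => ?_
  rw [interior_Ici] at ht
  rw [(hderiv t).deriv]
  have hdt := hd t ht.le
  exact mul_nonneg (exp_pos _).le (by linarith)

theorem nonneg_of_deriv_ge_neg_mul {f : ℝ → ℝ} {α : ℝ} (hf : Differentiable ℝ f)
    (hd : ∀ t, 0 ≤ t → -α * f t ≤ deriv f t) (h0 : 0 ≤ f 0) {t : ℝ} (ht : 0 ≤ t) :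
    0 ≤ f t := by
  have hmono := monotoneOn_exp_mul_of_deriv_ge_neg_mul hf hd self_mem_Ici ht ht
  simp only [mul_zero, exp_zero, one_mul] at hmono
  exact nonneg_of_mul_nonneg_right (h0.trans hmono) (exp_pos _)

theorem ho_cbf_forward_invariance_general
    (h : ℝ → ℝ) (α₁ α₂ : ℝ)
    (hsmooth : ContDiff ℝ 2 h)
    (b : ℝ → ℝ) (hb : ∀ t, b t = deriv h t + α₁ * h t)
    (hcbf : ∀ t, 0 ≤ t → deriv b t ≥ -α₂ * b t)
    (h0 : 0 ≤ h 0) (b0 : 0 ≤ b 0) :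
    ∀ t, 0 ≤ t → 0 ≤ h t := by
  have hh : Differentiable ℝ h := hsmooth.differentiable (by norm_num)
  have hb' : Differentiable ℝ b := by
    rw [funext hb]
    exact hsmooth.differentiable_deriv_two.add (hh.const_mul α₁)
  have hb_nonneg : ∀ t, 0 ≤ t → 0 ≤ b t := fun t ht =>
    nonneg_of_deriv_ge_neg_mul hb' hcbf b0 ht
  intro t ht
  refine nonneg_of_deriv_ge_neg_mul (α := α₁) hh (fun s hs => ?_) h0 ht
  linarith [hb s, hb_nonneg s hs]

theorem ho_cbf_forward_invariance
    (h : ℝ → ℝ) (α₁ α₂ : ℝ) (hα₁ : 0 < α₁) (hα₂ : 0 < α₂)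
    (hsmooth : ContDiff ℝ 2 h)
    (b : ℝ → ℝ) (hb : ∀ t, b t = deriv h t + α₁ * h t)
    (hcbf : ∀ t, 0 ≤ t → deriv b t ≥ -α₂ * b t)
    (h0 : 0 ≤ h 0) (b0 : 0 ≤ b 0) :
    ∀ t, 0 ≤ t → 0 ≤ h t :=
  ho_cbf_forward_invariance_general h α₁ α₂ hsmooth b hb hcbf h0 b0
end

section
/- Let g : [0,∞) → ℝ be continuous and let E : [0,∞) → {0,1} be the hysteresis switching state defined by E(0) = 0, switching 0 → 1 when g(t) ≤ 0 and 1 → 0 when g(t) ≥ δ, with δ > 0 fixed. Suppose g is L-Lipschitz. Then between any two consecutive switches of E, at least time δ/L elapses; in particular E has at most finitely many switches on any bounded interval (no Zeno behavior). -/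
/-!
Across a switch `g` changes by at least `δ`, so an `L`-Lipschitz `g` needs time at least `δ / L`.
A `δ / L`-separated subset of a compact interval is finite: each ball of radius `δ / (2L)` in a
finite cover contains at most one of its points.
-/

open Metric

theorem LipschitzWith.div_le_dist_of_le_dist {α β : Type*} [PseudoMetricSpace α]
    [PseudoMetricSpace β] {K : NNReal} {f : α → β} (hf : LipschitzWith K f) (hK : 0 < K)
    {d : ℝ} {x y : α} (h : d ≤ dist (f x) (f y)) : d / K ≤ dist x y := by
  rw [div_le_iff₀' (NNReal.coe_pos.2 hK)]
  exact h.trans (hf.dist_le_mul x y)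

theorem le_dist_of_hysteresis_switch {a b δ : ℝ} (h : (a ≤ 0 ∧ δ ≤ b) ∨ (δ ≤ a ∧ b ≤ 0)) :
    δ ≤ dist b a := by
  rw [Real.dist_eq, le_abs]
  rcases h with ⟨ha, hb⟩ | ⟨ha, hb⟩
  · left; linarith
  · right; linarith

theorem Set.Pairwise.subsingleton_inter_ball {α : Type*} [PseudoMetricSpace α] {S : Set α}
    {ε : ℝ} (hS : S.Pairwise fun x y => ε ≤ dist x y) (c : α) :
    (S ∩ ball c (ε / 2)).Subsingleton := by
  rintro x ⟨hxS, hx⟩ y ⟨hyS, hy⟩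
  by_contra hne
  rw [mem_ball] at hx hy
  linarith [hS hxS hyS hne, dist_triangle_right x y c]

theorem TotallyBounded.finite_of_pairwise_le_dist {α : Type*} [PseudoMetricSpace α]
    {S : Set α} {ε : ℝ} (hbdd : TotallyBounded S) (hε : 0 < ε)
    (hS : S.Pairwise fun x y => ε ≤ dist x y) : S.Finite := by
  obtain ⟨t, ht, hcover⟩ := totallyBounded_iff.1 hbdd (ε / 2) (half_pos hε)
  refine (ht.biUnion fun c _ => (hS.subsingleton_inter_ball c).finite).subset fun x hx => ?_
  obtain ⟨c, hc, hxc⟩ := Set.mem_iUnion₂.1 (hcover hx)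
  exact Set.mem_biUnion hc ⟨hx, hxc⟩

theorem hysteresis_min_dwell_time_no_zeno
    (g : ℝ → ℝ) (δ L : ℝ) (hδ : 0 < δ) (hL : 0 < L)
    (hlip : LipschitzWith (Real.toNNReal L) g) :
    (∀ t₁ t₂ : ℝ,
        ((g t₁ ≤ 0 ∧ δ ≤ g t₂) ∨ (δ ≤ g t₁ ∧ g t₂ ≤ 0)) →
        δ / L ≤ |t₂ - t₁|) ∧
      ∀ (a b : ℝ) (S : Set ℝ), S ⊆ Set.Icc a b →
        S.Pairwise (fun s t => δ / L ≤ |s - t|) → S.Finite := by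
  refine ⟨fun t₁ t₂ h => ?_, fun a b S hSab hsep => ?_⟩
  · have := hlip.div_le_dist_of_le_dist (Real.toNNReal_pos.2 hL) (le_dist_of_hysteresis_switch h)
    rwa [Real.coe_toNNReal L hL.le, Real.dist_eq] at this
  · simp only [← Real.dist_eq] at hsep
    exact (isCompact_Icc.totallyBounded.subset hSab).finite_of_pairwise_le_dist
      (div_pos hδ hL) hsep
end
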